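/- arXiv:0811.1075 — 7 statements merged into one kernel-verified Lean document; each statement's English description precedes it below -/
import Mathlib

section
/- If there is a w-resolution derivation (resolution where from clauses C0, C1 and variable x one may infer (C0 \ {x}) ∪ (C1 \ {¬x}) without requiring x ∈ C0 or ¬x ∈ C1) of a clause C from a CNF F of size n, then there is an ordinary resolution derivation from F of some clause C' ⊆ C of size at most n. -/
open Classical

noncomputable section

abbrev Var := ℕ
abbrev Lit := Var × Bool

def Lit.neg (l : Lit) : Lit := (l.1, !l.2)
def posLit (x : Var) : Lit := (x, true)
def negLit (x : Var) : Lit := (x, false)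

abbrev Clause := Finset Lit
abbrev CNF := Set Clause
abbrev Assign := Var → Option Bool

def Assign.set (α : Assign) (x : Var) (b : Bool) : Assign :=
  fun y => if y = x then some b else α y

def emptyAssign : Assign := fun _ => none

/-- `α` assigns the value false to every literal of `C` (i.e. `C↾α = 0`). -/
def falsifies (α : Assign) (C : Clause) : Prop := ∀ l ∈ C, α l.1 = some (!l.2)

def satLit (α : Assign) (l : Lit) : Prop := α l.1 = some l.2

/-- `F↾α = 0`. -/
def CNFFalse (F : CNF) (α : Assign) : Prop := ∃ C ∈ F, falsifies α C

/-- `F↾α = 1`. -/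
def CNFTrue (F : CNF) (α : Assign) : Prop := ∀ C ∈ F, ∃ l ∈ C, satLit α l

def Unsat (F : CNF) : Prop := ¬ ∃ β : Var → Bool, ∀ C ∈ F, ∃ l ∈ C, β l.1 = l.2

/-- The (w-)resolvent of `C0` and `C1` on the variable `x`. -/
def Resolvent (C0 C1 : Clause) (x : Var) : Clause :=
  C0.erase (posLit x) ∪ C1.erase (negLit x)

/-- A resolution derivation, as a sequence of clauses. -/
def IsResDeriv (F : CNF) (L : List Clause) : Prop :=
  ∀ i (hi : i < L.length),
    L[i] ∈ F ∨ ∃ j k x, ∃ hj : j < L.length, ∃ hk : k < L.length, j < i ∧ k < i ∧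
      posLit x ∈ L[j] ∧ negLit x ∈ L[k] ∧ L[i] = Resolvent L[j] L[k] x

/-- A w-resolution derivation: no membership requirements on the resolved variable. -/
def IsWResDeriv (F : CNF) (L : List Clause) : Prop :=
  ∀ i (hi : i < L.length),
    L[i] ∈ F ∨ ∃ j k x, ∃ hj : j < L.length, ∃ hk : k < L.length, j < i ∧ k < i ∧
      L[i] = Resolvent L[j] L[k] x

/-- A derivation using resolution and the weakening rule. -/
def IsResWeakDeriv (F : CNF) (L : List Clause) : Prop :=
  ∀ i (hi : i < L.length),
    L[i] ∈ F ∨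
    (∃ j, ∃ hj : j < L.length, j < i ∧ L[j] ⊆ L[i]) ∨
    ∃ j k x, ∃ hj : j < L.length, ∃ hk : k < L.length, j < i ∧ k < i ∧
      posLit x ∈ L[j] ∧ negLit x ∈ L[k] ∧ L[i] = Resolvent L[j] L[k] x

/-- Ordered binary resolution trees (nodes carry their clause and resolution variable). -/
inductive RTree where
  | leaf (C : Clause)
  | node (C : Clause) (x : Var) (t0 t1 : RTree)

namespace RTree

def conc : RTree → Clause
  | leaf C => C
  | node C _ _ _ => C

def size : RTree → ℕ
  | leaf _ => 1
  | node _ _ t0 t1 => t0.size + t1.size + 1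

def resVars : RTree → Finset Var
  | leaf _ => ∅
  | node _ x t0 t1 => insert x (t0.resVars ∪ t1.resVars)

def allClauses : RTree → Set Clause
  | leaf C => {C}
  | node C _ t0 t1 => {C} ∪ t0.allClauses ∪ t1.allClauses

def derivedClauses : RTree → Set Clause
  | leaf _ => ∅
  | node C _ t0 t1 => {C} ∪ t0.derivedClauses ∪ t1.derivedClauses

def leafClauses : RTree → Set Clause
  | leaf C => {C}
  | node _ _ t0 t1 => t0.leafClauses ∪ t1.leafClauses

def isLeaf : RTree → Prop
  | leaf _ => True
  | node _ _ _ _ => False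

/-- Every internal node has at least one leaf child: input trees. -/
def inputShape : RTree → Prop
  | leaf _ => True
  | node _ _ t0 t1 => (t0.isLeaf ∨ t1.isLeaf) ∧ t0.inputShape ∧ t1.inputShape

/-- All inferences are proper (ordinary) resolution inferences. -/
def properRes : RTree → Prop
  | leaf _ => True
  | node C x t0 t1 => posLit x ∈ t0.conc ∧ negLit x ∈ t1.conc ∧
      C = Resolvent t0.conc t1.conc x ∧ t0.properRes ∧ t1.properRes

/-- The clauses of the input-derived nodes of a tree (subtrees that are input
resolution proofs). -/
def inputClauses : RTree → Set Clause
  | leaf C => {C}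
  | node C x t0 t1 =>
      (if (RTree.node C x t0 t1).inputShape ∧ (RTree.node C x t0 t1).properRes
        then ({C} : Set Clause) else ∅)
      ∪ t0.inputClauses ∪ t1.inputClauses

/-- Number of non-input-derived nodes. -/
def nonInputCount : RTree → ℕ
  | leaf _ => 0
  | node C x t0 t1 =>
      (if (RTree.node C x t0 t1).inputShape ∧ (RTree.node C x t0 t1).properRes
        then 0 else 1)
      + t0.nonInputCount + t1.nonInputCount

/-- Regularity: no variable is used twice as resolution variable on a path. -/
def regAux : RTree → Set Var → Prop
  | leaf _, _ => True
  | node _ x t0 t1, s => x ∉ s ∧ t0.regAux (insert x s) ∧ t1.regAux (insert x s)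

def regular (t : RTree) : Prop := t.regAux ∅

end RTree

/-- An ordinary resolution tree with all leaves labeled by clauses of `F`. -/
def IsResTreeFrom (F : CNF) : RTree → Prop
  | .leaf C => C ∈ F
  | .node C x t0 t1 => IsResTreeFrom F t0 ∧ IsResTreeFrom F t1 ∧
      posLit x ∈ t0.conc ∧ negLit x ∈ t1.conc ∧ C = Resolvent t0.conc t1.conc x

/-- Resolution tree with input lemmas; `avail` is the set of lemmas available
from earlier (in post-order) input-derived nodes. -/
def IsRTI (F : CNF) : RTree → Set Clause → Prop
  | .leaf C, avail => C ∈ F ∨ C ∈ avail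
  | .node C x t0 t1, avail => IsRTI F t0 avail ∧ IsRTI F t1 (avail ∪ t0.inputClauses) ∧
      posLit x ∈ t0.conc ∧ negLit x ∈ t1.conc ∧ C = Resolvent t0.conc t1.conc x

/-- w-resolution tree with input lemmas. -/
def IsWRTI (F : CNF) : RTree → Set Clause → Prop
  | .leaf C, avail => C ∈ F ∨ C ∈ avail
  | .node C x t0 t1, avail => IsWRTI F t0 avail ∧ IsWRTI F t1 (avail ∪ t0.inputClauses) ∧
      C = Resolvent t0.conc t1.conc x

/-- Resolution tree with (arbitrary earlier) lemmas. -/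
def IsRTL (F : CNF) : RTree → Set Clause → Prop
  | .leaf C, avail => C ∈ F ∨ C ∈ avail
  | .node C x t0 t1, avail => IsRTL F t0 avail ∧ IsRTL F t1 (avail ∪ t0.allClauses) ∧
      posLit x ∈ t0.conc ∧ negLit x ∈ t1.conc ∧ C = Resolvent t0.conc t1.conc x

/-- w-resolution tree with (arbitrary earlier) lemmas. -/
def IsWRTL (F : CNF) : RTree → Set Clause → Prop
  | .leaf C, avail => C ∈ F ∨ C ∈ avail
  | .node C x t0 t1, avail => IsWRTL F t0 avail ∧ IsWRTL F t1 (avail ∪ t0.allClauses) ∧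
      C = Resolvent t0.conc t1.conc x

/-- Resolution dags, presented in a topological order; node `n-1` is the conclusion. -/
structure RDag (F : CNF) where
  n : ℕ
  npos : 0 < n
  clause : Fin n → Clause
  pred : Fin n → Option (Fin n × Fin n × Var)
  topo : ∀ i p, pred i = some p → p.1 < i ∧ p.2.1 < i
  leaf_mem : ∀ i, pred i = none → clause i ∈ F
  res_ok : ∀ i j k x, pred i = some (j, k, x) →
    posLit x ∈ clause j ∧ negLit x ∈ clause k ∧ clause i = Resolvent (clause j) (clause k) x

namespace RDag

variable {F : CNF}

def root (R : RDag F) : Fin R.n := ⟨R.n - 1, Nat.sub_lt R.npos one_pos⟩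

def parent (R : RDag F) (j i : Fin R.n) : Prop :=
  ∃ p, R.pred i = some p ∧ (p.1 = j ∨ p.2.1 = j)

def resVar (R : RDag F) (i : Fin R.n) : Option Var := (R.pred i).map (fun p => p.2.2)

def regular (R : RDag F) : Prop :=
  ∀ i j x, Relation.TransGen R.parent j i → R.resVar i = some x → R.resVar j ≠ some x

/-- `PathLen R i m`: there is a path with `m` edges from some leaf of `R` to `i`. -/
inductive PathLen (R : RDag F) : Fin R.n → ℕ → Prop
  | leaf (i) (h : R.pred i = none) : PathLen R i 0
  | step (i j m) (h : R.parent j i) (hj : PathLen R j m) : PathLen R i (m + 1)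

end RDag

/-- w-resolution dags. -/
structure WRDag (F : CNF) where
  n : ℕ
  npos : 0 < n
  clause : Fin n → Clause
  pred : Fin n → Option (Fin n × Fin n × Var)
  topo : ∀ i p, pred i = some p → p.1 < i ∧ p.2.1 < i
  leaf_mem : ∀ i, pred i = none → clause i ∈ F
  res_ok : ∀ i j k x, pred i = some (j, k, x) →
    clause i = Resolvent (clause j) (clause k) x

namespace WRDag

variable {F : CNF}

def root (R : WRDag F) : Fin R.n := ⟨R.n - 1, Nat.sub_lt R.npos one_pos⟩

def parent (R : WRDag F) (j i : Fin R.n) : Prop :=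
  ∃ p, R.pred i = some p ∧ (p.1 = j ∨ p.2.1 = j)

def resVar (R : WRDag F) (i : Fin R.n) : Option Var := (R.pred i).map (fun p => p.2.2)

def regular (R : WRDag F) : Prop :=
  ∀ i j x, Relation.TransGen R.parent j i → R.resVar i = some x → R.resVar j ≠ some x

def IsRefutation (R : WRDag F) : Prop := R.clause R.root = ∅

/-- `PathLits R v S`: there is a path from `v` to the root of `R` whose set of
edge labels is `S` (the edge from the first premise is labeled `¬x`, from the
second premise `x`). -/
inductive PathLits (R : WRDag F) : Fin R.n → Set Lit → Prop
  | root : PathLits R R.root ∅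
  | left (i j k x S) (h : R.pred i = some (j, k, x)) (hi : PathLits R i S) :
      PathLits R j (insert (negLit x) S)
  | right (i j k x S) (h : R.pred i = some (j, k, x)) (hi : PathLits R i S) :
      PathLits R k (insert (posLit x) S)

end WRDag
/-- A conflict graph for `F` under `α`.  The special node `□` is left implicit:
`x` is the conflict variable, and the edges from `x` and `¬x` to `□` are not
represented. -/
structure ConflictGraph (F : CNF) (α : Assign) where
  V : Finset Lit
  E : Finset (Lit × Lit)
  x : Var
  pos_mem : posLit x ∈ V
  neg_mem : negLit x ∈ V
  uniq : ∀ y, posLit y ∈ V → negLit y ∈ V → y = x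
  edges_mem : ∀ e ∈ E, e.1 ∈ V ∧ e.2 ∈ V
  acyclic : ∃ rank : Lit → ℕ, ∀ e ∈ E, rank e.1 < rank e.2
  leaf_true : ∀ l ∈ V, (∀ e ∈ E, e.2 ≠ l) → α l.1 = some l.2
  internal_clause : ∀ l ∈ V, (∃ e ∈ E, e.2 = l) →
      insert l ((V.filter (fun p => (p, l) ∈ E)).image Lit.neg) ∈ F
  sink : ∀ l ∈ V, (∃ e ∈ E, e.1 = l) ∨ l = posLit x ∨ l = negLit x

namespace ConflictGraph

variable {F : CNF} {α : Assign}

def leaves (G : ConflictGraph F α) : Finset Lit :=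
  G.V.filter (fun l => ∀ e ∈ G.E, e.2 ≠ l)

/-- The conflict clause: negations of the leaf literals. -/
def conflictClause (G : ConflictGraph F α) : Clause := G.leaves.image Lit.neg

def Reach (G : ConflictGraph F α) (a b : Lit) : Prop :=
  Relation.ReflTransGen (fun u v => (u, v) ∈ G.E) a b

/-- The induced clause of a literal `l`. -/
def inducedClause (G : ConflictGraph F α) (l : Lit) : Clause :=
  insert l ((G.leaves.filter (fun p => G.Reach p l)).image Lit.neg)

end ConflictGraph

/-- `H` is a subconflict graph of `G`. -/
def Subconflict {F : CNF} {α : Assign} (H G : ConflictGraph F α) : Prop :=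
  H.V ⊆ G.V ∧ H.E ⊆ G.E ∧ H.x = G.x ∧
  ∀ l ∈ H.V, (∃ e ∈ H.E, e.2 = l) → ∀ e ∈ G.E, e.2 = l → e ∈ H.E

/-- `H` is a proper subconflict graph of `G`: additionally, no path in `G` runs
from a non-leaf vertex of `H` to a leaf of `H`. -/
def ProperSub {F : CNF} {α : Assign} (H G : ConflictGraph F α) : Prop :=
  Subconflict H G ∧
  ∀ l ∈ H.V, (∃ e ∈ H.E, e.2 = l) → ∀ p ∈ H.leaves, ¬ G.Reach l p

def StrictSub {F : CNF} {α : Assign} (H G : ConflictGraph F α) : Prop :=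
  Subconflict H G ∧ (H.V ≠ G.V ∨ H.E ≠ G.E)

/-- A series-parallel decomposition of a conflict graph `G`:
`H i 0 = H_i` for `i ≤ k` and `H i j = H_{i,j}` for `j ≤ m i`. -/
structure SPDecomp {F : CNF} {α : Assign} (G : ConflictGraph F α) where
  k : ℕ
  hk : 1 ≤ k
  m : ℕ → ℕ
  hm : ∀ i < k, 1 ≤ m i
  H : ℕ → ℕ → ConflictGraph F α
  base_V : (H 0 0).V = {posLit G.x, negLit G.x}
  base_E : (H 0 0).E = ∅
  chain : ∀ i < k, ∀ j < m i, StrictSub (H i j) (H i (j + 1))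
  proper : ∀ i < k, ∀ j ≤ m i, ProperSub (H i j) G
  link : ∀ i, i + 1 < k → H i (m i) = H (i + 1) 0
  top : H (k - 1) (m (k - 1)) = G

/-- The learnable clauses of a series-parallel decomposition. -/
def SPDecomp.learnable {F : CNF} {α : Assign} {G : ConflictGraph F α}
    (D : SPDecomp G) : Set Clause :=
  {C | ∃ j, 1 ≤ j ∧ j ≤ D.m 0 ∧ C = (D.H 0 j).conflictClause} ∪
  {C | ∃ i j l, 0 < i ∧ i < D.k ∧ 1 ≤ j ∧ j ≤ D.m i ∧
      l ∈ (D.H i 0).leaves ∧ l ∉ (D.H i j).leaves ∧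
      C = (D.H i j).inducedClause l}

def SPDecomp.isSeries {F : CNF} {α : Assign} {G : ConflictGraph F α}
    (D : SPDecomp G) : Prop := D.k = 1

/-- Executions of the basic DLL algorithm returning UNSAT;
the `ℕ` counts the recursive calls made. -/
inductive DLLUnsat (F : CNF) : Assign → ℕ → Prop
  | conflict (α) (h : CNFFalse F α) : DLLUnsat F α 0
  | branch (α) (x : Var) (ε : Bool) (s0 s1 : ℕ)
      (hnot0 : ¬ CNFFalse F α) (hnot1 : ¬ CNFTrue F α) (hx : α x = none)
      (h0 : DLLUnsat F (α.set x ε) s0) (h1 : DLLUnsat F (α.set x (!ε)) s1) :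
      DLLUnsat F α (s0 + s1 + 2)

/-- Executions of the (non-greedy) DLL-L-UP algorithm returning UNSAT:
`DLLLUP F α s F'` means the call on `(F, α)` returns `(F', UNSAT)` after `s`
recursive calls. -/
inductive DLLLUP : CNF → Assign → ℕ → CNF → Prop
  | conflict (F : CNF) (α : Assign) (G : ConflictGraph F α) (D : SPDecomp G)
      (S : Set Clause) (hS : S ⊆ D.learnable) : DLLLUP F α 0 (F ∪ S)
  | branch (F : CNF) (α : Assign) (x : Var) (ε : Bool) (s0 s1 : ℕ) (F1 F2 : CNF)
      (hx : α x = none)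
      (h0 : DLLLUP F (α.set x ε) s0 F1) (h1 : DLLLUP F1 (α.set x (!ε)) s1 F2) :
      DLLLUP F α (s0 + s1 + 2) F2

/-- Executions of DLL-Learn returning UNSAT: `DLLLearn F α s F' C` means the
call on `(F, α)` returns `(F', UNSAT)` with tagged clause `C` after `s`
recursive calls. -/
inductive DLLLearn : CNF → Assign → ℕ → CNF → Clause → Prop
  | base (F : CNF) (α : Assign) (C : Clause) (hC : C ∈ F) (hf : falsifies α C) :
      DLLLearn F α 0 F C
  | branch (F : CNF) (α : Assign) (x : Var) (ε : Bool) (s0 s1 : ℕ)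
      (F1 F2 : CNF) (C0 C1 : Clause) (hx : α x = none)
      (h0 : DLLLearn F (α.set x ε) s0 F1 C0)
      (h1 : DLLLearn F1 (α.set x (!ε)) s1 F2 C1) :
      DLLLearn F α (s0 + s1 + 2)
        (F2 ∪ {C0.erase (x, !ε) ∪ C1.erase (x, ε)})
        (C0.erase (x, !ε) ∪ C1.erase (x, ε))

/-- Trees of resolution and weakening inferences. -/
inductive WTree where
  | leaf (C : Clause)
  | res (C : Clause) (x : Var) (t0 t1 : WTree)
  | weak (C : Clause) (t : WTree)

namespace WTree

def conc : WTree → Clause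
  | leaf C => C
  | res C _ _ _ => C
  | weak C _ => C

def size : WTree → ℕ
  | leaf _ => 1
  | res _ _ t0 t1 => t0.size + t1.size + 1
  | weak _ t => t.size + 1

def allClauses : WTree → Set Clause
  | leaf C => {C}
  | res C _ t0 t1 => {C} ∪ t0.allClauses ∪ t1.allClauses
  | weak C t => {C} ∪ t.allClauses

def leafClauses : WTree → Set Clause
  | leaf C => {C}
  | res _ _ t0 t1 => t0.leafClauses ∪ t1.leafClauses
  | weak _ t => t.leafClauses

end WTree

/-- Resolution trees with lemmas and weakening, all lemmas of size `≤ k`. -/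
def IsRTLW (F : CNF) (k : ℕ) : WTree → Set Clause → Prop
  | .leaf C, avail => C ∈ F ∨ (C ∈ avail ∧ C.card ≤ k)
  | .res C x t0 t1, avail => IsRTLW F k t0 avail ∧ IsRTLW F k t1 (avail ∪ t0.allClauses) ∧
      posLit x ∈ t0.conc ∧ negLit x ∈ t1.conc ∧ C = Resolvent t0.conc t1.conc x
  | .weak C t, avail => IsRTLW F k t avail ∧ t.conc ⊆ C

def phpVar (n i j : ℕ) : Var := i * n + j

/-- The clauses of the functional pigeonhole principle `FPHP_n`. -/
def FPHP (n : ℕ) : CNF :=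
  {C | ∃ i, 1 ≤ i ∧ i ≤ n + 1 ∧
      C = (Finset.Icc 1 n).image (fun j => posLit (phpVar n i j))} ∪
  {C | ∃ i j k, 1 ≤ i ∧ i < j ∧ j ≤ n + 1 ∧ 1 ≤ k ∧ k ≤ n ∧
      C = {negLit (phpVar n i k), negLit (phpVar n j k)}} ∪
  {C | ∃ i j k, 1 ≤ i ∧ i ≤ n + 1 ∧ 1 ≤ j ∧ j < k ∧ k ≤ n ∧
      C = {negLit (phpVar n i j), negLit (phpVar n i k)}}

/-- The variable extension `VE(F)` with extension variables `q` and `P`. -/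
def VE (F : CNF) (q : Var) (P : Finset Var) : CNF :=
  F ∪ {D | ∃ C ∈ F, ∃ l ∈ C, D = {posLit q, Lit.neg l}} ∪ {P.image posLit}

/-!
Walk through the w-resolution derivation and build, clause by clause, a resolution derivation
whose `i`-th clause is a subclause of the `i`-th clause of the given one. A w-resolution step on
`x` with premises `C0 ⊇ D0` and `C1 ⊇ D1` becomes an ordinary resolution step on `D0, D1` when
`x ∈ D0` and `¬x ∈ D1`; otherwise `D0` (if `x ∉ D0`) or `D1` (if `¬x ∉ D1`) is already contained
in the w-resolvent and is simply repeated, re-using its own justification.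
-/

theorem List.Forall₂.exists_mem_of_mem_right {α β : Type*} {R : α → β → Prop} {l₁ : List α}
    {l₂ : List β} {b : β} (h : List.Forall₂ R l₁ l₂) (hb : b ∈ l₂) : ∃ a ∈ l₁, R a b := by
  induction h with
  | nil => simp at hb
  | cons hab _ ih =>
    rcases List.mem_cons.1 hb with rfl | hb
    · exact ⟨_, List.mem_cons_self, hab⟩
    · obtain ⟨a, ha, hR⟩ := ih hb
      exact ⟨a, List.mem_cons_of_mem _ ha, hR⟩

theorem List.Forall₂.exists_getLast?_eq {α β : Type*} {R : α → β → Prop} {l₁ : List α}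
    {l₂ : List β} {b : β} (h : List.Forall₂ R l₁ l₂) (hb : l₂.getLast? = some b) :
    ∃ a, l₁.getLast? = some a ∧ R a b := by
  rw [← List.head?_reverse] at hb ⊢
  have h := List.forall₂_reverse_iff.2 h
  generalize l₁.reverse = r₁, l₂.reverse = r₂ at h hb ⊢
  cases h with
  | nil => simp at hb
  | cons hab _ => exact ⟨_, rfl, Option.some_injective _ hb ▸ hab⟩

def IsResStep (F : CNF) (L : List Clause) (D : Clause) : Prop :=
  D ∈ F ∨ ∃ D0 ∈ L, ∃ D1 ∈ L, ∃ x, posLit x ∈ D0 ∧ negLit x ∈ D1 ∧ D = Resolvent D0 D1 x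

theorem resolvent_mono {C0 C1 D0 D1 : Clause} (h0 : D0 ⊆ C0) (h1 : D1 ⊆ C1) (x : Var) :
    Resolvent D0 D1 x ⊆ Resolvent C0 C1 x :=
  Finset.union_subset_union (Finset.erase_subset_erase _ h0) (Finset.erase_subset_erase _ h1)

theorem subset_resolvent_left {C0 D0 : Clause} {x : Var} (h0 : D0 ⊆ C0) (hx : posLit x ∉ D0)
    (C1 : Clause) : D0 ⊆ Resolvent C0 C1 x := fun _ hl =>
  Finset.mem_union_left _ (Finset.mem_erase.2 ⟨fun h => hx (h ▸ hl), h0 hl⟩)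

theorem subset_resolvent_right {C1 D1 : Clause} {x : Var} (h1 : D1 ⊆ C1) (hx : negLit x ∉ D1)
    (C0 : Clause) : D1 ⊆ Resolvent C0 C1 x := fun _ hl =>
  Finset.mem_union_right _ (Finset.mem_erase.2 ⟨fun h => hx (h ▸ hl), h1 hl⟩)

theorem isResDeriv_nil (F : CNF) : IsResDeriv F [] := fun _ hi => absurd hi (Nat.not_lt_zero _)

namespace IsResDeriv

variable {F : CNF} {L : List Clause} {D : Clause}

theorem isResStep_of_mem (hL : IsResDeriv F L) (hD : D ∈ L) : IsResStep F L D := by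
  obtain ⟨i, hi, rfl⟩ := List.mem_iff_getElem.1 hD
  rcases hL i hi with hF | ⟨j, k, x, hj, hk, -, -, hpos, hneg, hres⟩
  · exact Or.inl hF
  · exact Or.inr ⟨_, List.getElem_mem hj, _, List.getElem_mem hk, x, hpos, hneg, hres⟩

theorem append_singleton (hL : IsResDeriv F L) (hD : IsResStep F L D) :
    IsResDeriv F (L ++ [D]) := by
  intro i hi
  have hlen : (L ++ [D]).length = L.length + 1 := by simp
  rcases Nat.lt_succ_iff_lt_or_eq.1 (hlen ▸ hi) with hi | rfl
  · rw [List.getElem_append_left hi]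
    rcases hL i hi with hF | ⟨j, k, x, hj, hk, hji, hki, hpos, hneg, hres⟩
    · exact Or.inl hF
    · refine Or.inr ⟨j, k, x, by omega, by omega, hji, hki, ?_⟩
      simpa only [List.getElem_append_left hj, List.getElem_append_left hk] using
        ⟨hpos, hneg, hres⟩
  · rw [List.getElem_concat_length rfl]
    rcases hD with hF | ⟨D0, hD0, D1, hD1, x, hpos, hneg, hres⟩
    · exact Or.inl hF
    obtain ⟨j, hj, rfl⟩ := List.mem_iff_getElem.1 hD0
    obtain ⟨k, hk, rfl⟩ := List.mem_iff_getElem.1 hD1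
    refine Or.inr ⟨j, k, x, by omega, by omega, hj, hk, ?_⟩
    simpa only [List.getElem_append_left hj, List.getElem_append_left hk] using
      ⟨hpos, hneg, hres⟩

theorem exists_isResStep_subset_resolvent (hL : IsResDeriv F L) {D0 D1 C0 C1 : Clause}
    (hD0 : D0 ∈ L) (hD1 : D1 ∈ L) (h0 : D0 ⊆ C0) (h1 : D1 ⊆ C1) (x : Var) :
    ∃ D, D ⊆ Resolvent C0 C1 x ∧ IsResStep F L D := by
  by_cases hpos : posLit x ∈ D0
  · by_cases hneg : negLit x ∈ D1
    · exact ⟨_, resolvent_mono h0 h1 x, Or.inr ⟨D0, hD0, D1, hD1, x, hpos, hneg, rfl⟩⟩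
    · exact ⟨D1, subset_resolvent_right h1 hneg C0, hL.isResStep_of_mem hD1⟩
  · exact ⟨D0, subset_resolvent_left h0 hpos C1, hL.isResStep_of_mem hD0⟩

end IsResDeriv

theorem IsWResDeriv.of_append_singleton {F : CNF} {L : List Clause} {C : Clause}
    (h : IsWResDeriv F (L ++ [C])) :
    IsWResDeriv F L ∧ (C ∈ F ∨ ∃ C0 ∈ L, ∃ C1 ∈ L, ∃ x, C = Resolvent C0 C1 x) := by
  constructor
  · intro i hi
    have hi' : i < (L ++ [C]).length := by simpa using Nat.lt_succ_of_lt hi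
    rcases h i hi' with hF | ⟨j, k, x, _, _, hji, hki, hres⟩
    · exact Or.inl (by simpa only [List.getElem_append_left hi] using hF)
    · refine Or.inr ⟨j, k, x, by omega, by omega, hji, hki, ?_⟩
      simpa only [List.getElem_append_left hi, List.getElem_append_left (hji.trans hi),
        List.getElem_append_left (hki.trans hi)] using hres
  · rcases h L.length (by simp) with hF | ⟨j, k, x, _, _, hj, hk, hres⟩
    · exact Or.inl (by simpa using hF)
    · refine Or.inr ⟨L[j], List.getElem_mem hj, L[k], List.getElem_mem hk, x, ?_⟩
      simpa only [List.getElem_concat_length, List.getElem_append_left hj,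
        List.getElem_append_left hk] using hres

theorem IsWResDeriv.exists_isResDeriv_forall₂_subset {F : CNF} {L : List Clause}
    (hL : IsWResDeriv F L) : ∃ L', IsResDeriv F L' ∧ List.Forall₂ (· ⊆ ·) L' L := by
  induction L using List.reverseRecOn with
  | nil => exact ⟨[], isResDeriv_nil F, List.Forall₂.nil⟩
  | append_singleton L C ih =>
    obtain ⟨hL, hC⟩ := hL.of_append_singleton
    obtain ⟨L', hL', hsub⟩ := ih hL
    suffices ∃ D, D ⊆ C ∧ IsResStep F L' D by
      obtain ⟨D, hDC, hD⟩ := this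
      exact ⟨L' ++ [D], hL'.append_singleton hD, List.rel_append hsub (.cons hDC .nil)⟩
    rcases hC with hF | ⟨C0, hC0, C1, hC1, x, rfl⟩
    · exact ⟨C, subset_rfl, Or.inl hF⟩
    obtain ⟨D0, hD0, h0⟩ := hsub.exists_mem_of_mem_right hC0
    obtain ⟨D1, hD1, h1⟩ := hsub.exists_mem_of_mem_right hC1
    exact hL'.exists_isResStep_subset_resolvent hD0 hD1 h0 h1 x

/-- Prop. 2.2 (w-resolution part): a WRD proof of `C` of size `n` yields an RD
proof of some `C' ⊆ C` of size `≤ n`. -/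
theorem stmt0 (F : CNF) (C : Clause) (L : List Clause) (n : ℕ)
    (hL : IsWResDeriv F L) (hlast : L.getLast? = some C) (hn : L.length = n) :
    ∃ (L' : List Clause) (C' : Clause), C' ⊆ C ∧ IsResDeriv F L' ∧
      L'.getLast? = some C' ∧ L'.length ≤ n := by
  obtain ⟨L', hL', hsub⟩ := hL.exists_isResDeriv_forall₂_subset
  obtain ⟨C', hC', hC'C⟩ := hsub.exists_getLast?_eq hlast
  exact ⟨L', C', hC'C, hL', hC', (hsub.length_eq.trans hn).le⟩
end
end

section
/- Let G be a regular w-resolution refutation of a CNF F and let C be any clause in G. If α is a partial assignment making true every literal labeling an edge on the path from C to the final (empty) clause, then α falsifies every literal of C (i.e., C restricted by α equals 0). -/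
open Classical

noncomputable section

theorem falsifies.mono {α : Assign} {C D : Clause} (hCD : C ⊆ D) (hD : falsifies α D) :
    falsifies α C :=
  fun l hl => hD l (hCD hl)

theorem falsifies_of_falsifies_erase {α : Assign} {C : Clause} {l : Lit}
    (hC : falsifies α (C.erase l)) (hl : α l.1 = some (!l.2)) : falsifies α C := by
  intro l' hl'
  by_cases h : l' = l
  · exact h ▸ hl
  · exact hC l' (Finset.mem_erase.mpr ⟨h, hl'⟩)

theorem falsifies_left_of_falsifies_resolvent {α : Assign} {C0 C1 : Clause} {x : Var}
    (h : falsifies α (Resolvent C0 C1 x)) (hx : satLit α (negLit x)) : falsifies α C0 :=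
  falsifies_of_falsifies_erase (h.mono Finset.subset_union_left) hx

theorem falsifies_right_of_falsifies_resolvent {α : Assign} {C0 C1 : Clause} {x : Var}
    (h : falsifies α (Resolvent C0 C1 x)) (hx : satLit α (posLit x)) : falsifies α C1 :=
  falsifies_of_falsifies_erase (h.mono Finset.subset_union_right) hx

theorem stmt3_general (F : CNF) (R : WRDag F) (href : R.IsRefutation)
    (v : Fin R.n) (S : Set Lit) (hp : R.PathLits v S) (α : Assign)
    (hα : ∀ l ∈ S, satLit α l) : falsifies α (R.clause v) := by
  induction hp with
  | root => exact fun l hl => absurd (href ▸ hl) (Finset.notMem_empty l)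
  | left i j k x S h _ ih =>
    refine falsifies_left_of_falsifies_resolvent (C1 := R.clause k) (x := x) ?_ (hα _ (.inl rfl))
    exact R.res_ok i j k x h ▸ ih fun l hl => hα l (.inr hl)
  | right i j k x S h _ ih =>
    refine falsifies_right_of_falsifies_resolvent (C0 := R.clause j) (x := x) ?_ (hα _ (.inl rfl))
    exact R.res_ok i j k x h ▸ ih fun l hl => hα l (.inr hl)

/-- Thm. 2.4(b): if `α` satisfies every literal labeling an edge on a path from
`v` to the final clause of a regular w-resolution refutation, then `α`
falsifies the clause at `v`. -/
theorem stmt3 (F : CNF) (R : WRDag F) (hreg : R.regular) (href : R.IsRefutation)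
    (v : Fin R.n) (S : Set Lit) (hp : R.PathLits v S) (α : Assign)
    (hα : ∀ l ∈ S, satLit α l) : falsifies α (R.clause v) :=
  stmt3_general F R href v S hp α hα
end
end

section
/- Resolution trees with lemmas (RTL) and resolution dags (RD) polynomially simulate each other: an RD of size s can be converted into an RTL of size polynomial in s deriving the same clause, and conversely. -/
/-!
A resolution dag is unfolded into a tree by a depth-first traversal from the root that expands
each dag node only on its first visit; every later visit becomes a leaf labelled by a lemma, since
the node's clause already occurs earlier in post-order. Each node is expanded once and an expansion
adds at most two tree nodes, so the tree has at most `2n + 1` nodes. Conversely, listing the clauses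
of an RTL in post-order and skipping the lemma leaves gives a resolution derivation, hence a
resolution dag, with at most as many clauses as the tree has nodes.
-/

open Classical

noncomputable section

def IsPolyBound (p : ℕ → ℕ) : Prop := ∃ c e : ℕ, ∀ s, p s ≤ c * (s + 1) ^ e

lemma RTree.conc_mem_allClauses (t : RTree) : t.conc ∈ t.allClauses := by
  cases t <;> simp [RTree.conc, RTree.allClauses]

namespace RDag

variable {F : CNF} (R : RDag F)

/-- Depth-first unfolding from `i`; `S` is the set of nodes expanded so far, whose clauses are
available as lemmas. Each new expansion costs at most two tree nodes. -/
lemma exists_isRTL_expanding (i : Fin R.n) :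
    ∀ (S : Finset (Fin R.n)) (avail : Set Clause), R.clause '' S ⊆ avail →
    ∃ (t : RTree) (S' : Finset (Fin R.n)), S ⊆ S' ∧ i ∈ S' ∧ S' ⊆ S ∪ Finset.Iic i ∧
      IsRTL F t avail ∧ t.conc = R.clause i ∧ R.clause '' S' ⊆ avail ∪ t.allClauses ∧
      t.size + 2 * S.card ≤ 2 * S'.card + 1 := by
  induction i using WellFoundedLT.induction with
  | _ i ih =>
  intro S avail hS
  by_cases hiS : i ∈ S
  · refine ⟨.leaf (R.clause i), S, subset_rfl, hiS, Finset.subset_union_left, ?_, rfl,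
      hS.trans Set.subset_union_left, by simp [RTree.size]; omega⟩
    exact Or.inr (hS (Set.mem_image_of_mem _ hiS))
  rcases hp : R.pred i with _ | ⟨j, k, x⟩
  · refine ⟨.leaf (R.clause i), insert i S, Finset.subset_insert _ _, Finset.mem_insert_self _ _,
      Finset.insert_subset (by simp) Finset.subset_union_left, Or.inl (R.leaf_mem _ hp), rfl,
      ?_, ?_⟩
    · rw [Finset.coe_insert, Set.image_insert_eq]
      exact Set.insert_subset (Or.inr rfl) (hS.trans Set.subset_union_left)
    · rw [Finset.card_insert_of_notMem hiS]; simp [RTree.size]; omega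
  obtain ⟨hj, hk⟩ := R.topo _ _ hp
  obtain ⟨hxj, hxk, hres⟩ := R.res_ok _ _ _ _ hp
  obtain ⟨t0, S0, hSS0, -, hS0, ht0, hc0, hcov0, hsz0⟩ := ih j hj S avail hS
  obtain ⟨t1, S1, hS0S1, -, hS1, ht1, hc1, hcov1, hsz1⟩ :=
    ih k hk S0 (avail ∪ t0.allClauses) hcov0
  have hIic {m : Fin R.n} (hm : m < i) : Finset.Iic m ⊆ Finset.Iio i :=
    fun _ h => Finset.mem_Iio.2 ((Finset.mem_Iic.1 h).trans_lt hm)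
  have hS1i : S1 ⊆ S ∪ Finset.Iio i := hS1.trans <| Finset.union_subset
    (hS0.trans (Finset.union_subset_union_right (hIic hj)))
    ((hIic hk).trans Finset.subset_union_right)
  have hiS1 : i ∉ S1 := fun hi => by simpa [hiS] using hS1i hi
  refine ⟨.node (R.clause i) x t0 t1, insert i S1,
    hSS0.trans (hS0S1.trans (Finset.subset_insert _ _)), Finset.mem_insert_self _ _,
    Finset.insert_subset (by simp) (hS1i.trans (Finset.union_subset_union_right
      Finset.Iio_subset_Iic_self)),
    ⟨ht0, ht1, hc0 ▸ hxj, hc1 ▸ hxk, hc0 ▸ hc1 ▸ hres⟩, rfl, ?_, ?_⟩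
  · rw [Finset.coe_insert, Set.image_insert_eq]
    refine Set.insert_subset (Or.inr (Or.inl (Or.inl rfl))) (hcov1.trans ?_)
    simp only [RTree.allClauses]
    tauto_set
  · have := Finset.card_le_card hSS0
    rw [Finset.card_insert_of_notMem hiS1]; simp only [RTree.size]; omega

lemma exists_isRTL_size_le :
    ∃ t : RTree, IsRTL F t ∅ ∧ t.conc = R.clause R.root ∧ t.size ≤ 2 * R.n + 1 := by
  obtain ⟨t, S, -, -, -, ht, hconc, -, hsize⟩ := R.exists_isRTL_expanding R.root ∅ ∅ (by simp)
  have := S.card_le_univ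
  simp only [Finset.card_empty, Fintype.card_fin] at hsize this
  exact ⟨t, ht, hconc, by omega⟩

end RDag

namespace IsResDeriv

variable {F : CNF} {L : List Clause}

lemma concat (hL : IsResDeriv F L) {C : Clause}
    (hC : C ∈ F ∨ ∃ j k x, ∃ hj : j < L.length, ∃ hk : k < L.length,
      posLit x ∈ L[j] ∧ negLit x ∈ L[k] ∧ C = Resolvent L[j] L[k] x) :
    IsResDeriv F (L ++ [C]) := by
  intro i hi
  obtain hi | rfl : i < L.length ∨ i = L.length := by simp at hi; omega
  · rw [List.getElem_append_left hi]
    rcases hL i hi with h | ⟨j, k, x, hj, hk, hji, hki, h⟩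
    · exact .inl h
    · refine .inr ⟨j, k, x, by simp; omega, by simp; omega, hji, hki, ?_⟩
      simpa only [List.getElem_append_left hj, List.getElem_append_left hk] using h
  · rw [List.getElem_concat_length rfl]
    rcases hC with h | ⟨j, k, x, hj, hk, h⟩
    · exact .inl h
    · refine .inr ⟨j, k, x, by simp; omega, by simp; omega, hj, hk, ?_⟩
      simpa only [List.getElem_append_left hj, List.getElem_append_left hk] using h

lemma concat_resolvent (hL : IsResDeriv F L) {C₀ C₁ : Clause} {x : Var} (h₀ : C₀ ∈ L)
    (h₁ : C₁ ∈ L) (hx₀ : posLit x ∈ C₀) (hx₁ : negLit x ∈ C₁) :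
    IsResDeriv F (L ++ [Resolvent C₀ C₁ x]) := by
  obtain ⟨j, hj, rfl⟩ := List.getElem_of_mem h₀
  obtain ⟨k, hk, rfl⟩ := List.getElem_of_mem h₁
  exact hL.concat (.inr ⟨j, k, x, hj, hk, hx₀, hx₁, rfl⟩)

lemma exists_premises (hL : IsResDeriv F L) {n : ℕ} (hn : n ≤ L.length) (i : Fin n)
    (hi : L[i.val] ∉ F) :
    ∃ p : Fin n × Fin n × Var, p.1 < i ∧ p.2.1 < i ∧ posLit p.2.2 ∈ L[p.1.val] ∧
      negLit p.2.2 ∈ L[p.2.1.val] ∧ L[i.val] = Resolvent L[p.1.val] L[p.2.1.val] p.2.2 := by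
  rcases hL i (by omega) with h | ⟨j, k, x, hj, hk, hji, hki, h⟩
  · exact absurd h hi
  · exact ⟨(⟨j, by omega⟩, ⟨k, by omega⟩, x), hji, hki, h⟩

def toRDag (hL : IsResDeriv F L) (m : ℕ) (hm : m < L.length) : RDag F where
  n := m + 1
  npos := m.succ_pos
  clause i := L[i.val]
  pred i := if hi : L[i.val] ∈ F then none else some (hL.exists_premises hm i hi).choose
  topo i p hp := by
    split_ifs at hp with hi
    cases hp
    obtain ⟨hj, hk, -⟩ := (hL.exists_premises hm i hi).choose_spec
    exact ⟨hj, hk⟩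
  leaf_mem i hp := by
    split_ifs at hp with hi
    exact hi
  res_ok i j k x hp := by
    split_ifs at hp with hi
    obtain ⟨-, -, h⟩ := (hL.exists_premises hm i hi).choose_spec
    rw [Option.some_inj] at hp
    rw [hp] at h
    exact h

end IsResDeriv

namespace IsRTL

variable {F : CNF}

lemma exists_isResDeriv_append {t : RTree} {avail : Set Clause} (ht : IsRTL F t avail)
    {L₀ : List Clause} (hL₀ : IsResDeriv F L₀) (havail : avail ⊆ {C | C ∈ L₀}) :
    ∃ L, IsResDeriv F (L₀ ++ L) ∧ L.length ≤ t.size ∧ t.allClauses ⊆ {C | C ∈ L₀ ++ L} := by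
  induction t generalizing avail L₀ with
  | leaf C =>
    rcases ht with hF | hA
    · exact ⟨[C], hL₀.concat (.inl hF), by simp [RTree.size], by simp [RTree.allClauses]⟩
    · exact ⟨[], by simpa, by simp, by simpa [RTree.allClauses] using havail hA⟩
  | node C x t0 t1 ih0 ih1 =>
    obtain ⟨h0, h1, hx0, hx1, rfl⟩ := ht
    obtain ⟨L₁, hL₁, hlen₁, hsub₁⟩ := ih0 h0 hL₀ havail
    obtain ⟨L₂, hL₂, hlen₂, hsub₂⟩ := ih1 h1 hL₁
      (Set.union_subset (havail.trans fun _ hC => List.mem_append_left _ hC) hsub₁)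
    have hL := hL₂.concat_resolvent (List.mem_append_left _ (hsub₁ t0.conc_mem_allClauses))
      (hsub₂ t1.conc_mem_allClauses) hx0 hx1
    refine ⟨L₁ ++ L₂ ++ [Resolvent t0.conc t1.conc x], by simpa using hL,
      by simp only [RTree.size, List.length_append, List.length_singleton]; omega, ?_⟩
    rintro D ((rfl | hD) | hD)
    · simp
    · have := hsub₁ hD; simp only [Set.mem_ofPred_eq, List.mem_append] at this ⊢; tauto
    · have := hsub₂ hD; simp only [Set.mem_ofPred_eq, List.mem_append] at this ⊢; tauto

lemma exists_rDag {t : RTree} (ht : IsRTL F t ∅) :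
    ∃ R : RDag F, R.clause R.root = t.conc ∧ R.n ≤ t.size := by
  obtain ⟨L, hL, hlen, hsub⟩ :=
    ht.exists_isResDeriv_append (L₀ := []) (fun _ hi => by simp at hi) (by simp)
  rw [List.nil_append] at hL hsub
  obtain ⟨m, hm, hmC⟩ := List.getElem_of_mem (hsub t.conc_mem_allClauses)
  exact ⟨hL.toRDag m hm, hmC, by show m + 1 ≤ t.size; omega⟩

end IsRTL

/-- RTL and RD p-simulate each other. -/
theorem stmt6 :
    (∃ p : ℕ → ℕ, IsPolyBound p ∧
      ∀ (F : CNF) (R : RDag F), ∃ t : RTree,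
        IsRTL F t ∅ ∧ t.conc = R.clause R.root ∧ t.size ≤ p R.n) ∧
    (∃ p : ℕ → ℕ, IsPolyBound p ∧
      ∀ (F : CNF) (t : RTree), IsRTL F t ∅ →
        ∃ R : RDag F, R.clause R.root = t.conc ∧ R.n ≤ p t.size) :=
  ⟨⟨fun s => 2 * s + 1, ⟨2, 1, fun s => by simp⟩, fun _ R => R.exists_isRTL_size_le⟩,
    ⟨id, ⟨1, 1, fun s => by simp⟩, fun _ _ ht => ht.exists_rDag⟩⟩
end
end

section
/- Let F be an unsatisfiable set of clauses and α a partial assignment. If an execution of the basic DLL backtracking algorithm DLL(F, α) returns UNSAT after s recursive calls, then there exists a clause C falsified by α that has a regular resolution tree derivation T from F with |T| ≤ s+1 such that no variable in the domain of α is used as a resolution variable in T. -/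
open Classical

noncomputable section

def RegRefutes (F : CNF) (α : Assign) (t : RTree) : Prop :=
  IsResTreeFrom F t ∧ t.regular ∧ falsifies α t.conc ∧ ∀ y ∈ t.resVars, α y = none

theorem Assign.set_eq_none_iff {α : Assign} {x y : Var} {b : Bool} :
    α.set x b y = none ↔ y ≠ x ∧ α y = none := by
  by_cases hyx : y = x <;> simp [Assign.set, hyx]

theorem falsifies_erase_of_set {α : Assign} {x : Var} {b : Bool} {C : Clause}
    (h : falsifies (α.set x b) C) : falsifies α (C.erase (x, !b)) := by
  intro l hl
  obtain ⟨hne, hlC⟩ := Finset.mem_erase.mp hl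
  have hl_false := h l hlC
  by_cases hlx : l.1 = x
  · rw [Assign.set, if_pos hlx, Option.some.injEq] at hl_false
    exact absurd (Prod.ext hlx (by simp [hl_false])) hne
  · rwa [Assign.set, if_neg hlx] at hl_false

theorem falsifies_resolvent {α : Assign} {x : Var} {C0 C1 : Clause}
    (h0 : falsifies (α.set x false) C0) (h1 : falsifies (α.set x true) C1) :
    falsifies α (Resolvent C0 C1 x) := by
  intro l hl
  rcases Finset.mem_union.mp hl with hl | hl
  · exact falsifies_erase_of_set h0 l hl
  · exact falsifies_erase_of_set h1 l hl

theorem RTree.regAux_insert {t : RTree} {s : Set Var} {x : Var} (h : t.regAux s)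
    (hx : x ∉ t.resVars) : t.regAux (insert x s) := by
  induction t generalizing s with
  | leaf => trivial
  | node C y t0 t1 ih0 ih1 =>
    simp only [RTree.resVars, Finset.mem_insert, Finset.mem_union, not_or] at hx
    obtain ⟨hxy, hx0, hx1⟩ := hx
    obtain ⟨hy, h0, h1⟩ := h
    refine ⟨?_, ?_, ?_⟩
    · simpa [Ne.symm hxy] using hy
    · rw [Set.insert_comm]; exact ih0 h0 hx0
    · rw [Set.insert_comm]; exact ih1 h1 hx1

namespace RegRefutes

variable {F : CNF} {α : Assign} {x : Var} {b : Bool} {t : RTree}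

theorem notMem_resVars (h : RegRefutes F (α.set x b) t) : x ∉ t.resVars := fun hx => by
  simpa using (Assign.set_eq_none_iff.mp (h.2.2.2 x hx)).1

theorem of_set_of_notMem (h : RegRefutes F (α.set x b) t) (hx : (x, !b) ∉ t.conc) :
    RegRefutes F α t := by
  obtain ⟨hF, hreg, hfals, hvars⟩ := h
  refine ⟨hF, hreg, ?_, fun y hy => (Assign.set_eq_none_iff.mp (hvars y hy)).2⟩
  simpa [Finset.erase_eq_of_notMem hx] using falsifies_erase_of_set hfals

theorem node {t0 t1 : RTree} (h0 : RegRefutes F (α.set x false) t0)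
    (h1 : RegRefutes F (α.set x true) t1) (hx0 : posLit x ∈ t0.conc)
    (hx1 : negLit x ∈ t1.conc) (hx : α x = none) :
    RegRefutes F α (.node (Resolvent t0.conc t1.conc x) x t0 t1) := by
  refine ⟨⟨h0.1, h1.1, hx0, hx1, rfl⟩, ⟨Set.notMem_empty x, ?_, ?_⟩,
    falsifies_resolvent h0.2.2.1 h1.2.2.1, ?_⟩
  · exact RTree.regAux_insert h0.2.1 h0.notMem_resVars
  · exact RTree.regAux_insert h1.2.1 h1.notMem_resVars
  · intro y hy
    simp only [RTree.resVars, Finset.mem_insert, Finset.mem_union] at hy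
    rcases hy with rfl | hy | hy
    · exact hx
    · exact (Assign.set_eq_none_iff.mp (h0.2.2.2 y hy)).2
    · exact (Assign.set_eq_none_iff.mp (h1.2.2.2 y hy)).2

/-- If one branch's clause does not contain the literal falsified by that branch, it is
already falsified by `α`; otherwise the two clauses resolve on `x`. -/
theorem branch {ε : Bool} {t0 t1 : RTree} (h0 : RegRefutes F (α.set x ε) t0)
    (h1 : RegRefutes F (α.set x (!ε)) t1) (hx : α x = none) :
    ∃ t, RegRefutes F α t ∧ t.size ≤ t0.size + t1.size + 1 := by
  by_cases hx0 : (x, !ε) ∈ t0.conc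
  · by_cases hx1 : (x, ε) ∈ t1.conc
    · cases ε
      · exact ⟨_, node h0 h1 hx0 hx1 hx, le_rfl⟩
      · exact ⟨_, node h1 h0 hx1 hx0 hx, by simp only [RTree.size]; omega⟩
    · exact ⟨t1, h1.of_set_of_notMem (by simpa using hx1), by omega⟩
  · exact ⟨t0, h0.of_set_of_notMem hx0, by omega⟩

end RegRefutes

theorem DLLUnsat.exists_regRefutes {F : CNF} {α : Assign} {s : ℕ} (h : DLLUnsat F α s) :
    ∃ t, RegRefutes F α t ∧ t.size ≤ s + 1 := by
  induction h with
  | conflict α hfalse =>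
    obtain ⟨C, hC, hfals⟩ := hfalse
    exact ⟨.leaf C, ⟨hC, trivial, hfals, by simp [RTree.resVars]⟩, le_rfl⟩
  | branch α x ε s0 s1 _ _ hx _ _ ih0 ih1 =>
    obtain ⟨t0, h0, hsize0⟩ := ih0
    obtain ⟨t1, h1, hsize1⟩ := ih1
    obtain ⟨t, ht, hsize⟩ := h0.branch h1 hx
    exact ⟨t, ht, by omega⟩

theorem stmt7_general (F : CNF) (α : Assign) (s : ℕ)
    (h : DLLUnsat F α s) :
    ∃ (C : Clause) (t : RTree), IsResTreeFrom F t ∧ t.regular ∧ t.conc = C ∧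
      falsifies α C ∧ t.size ≤ s + 1 ∧ ∀ x ∈ t.resVars, α x = none := by
  obtain ⟨t, ⟨hF, hreg, hfals, hvars⟩, hsize⟩ := h.exists_regRefutes
  exact ⟨t.conc, t, hF, hreg, rfl, hfals, hsize, hvars⟩

/-- Prop. 4.1: a DLL execution on `(F, α)` returning UNSAT after `s` recursive
calls yields a clause `C` falsified by `α` with a regular resolution tree from
`F` of size `≤ s + 1` avoiding the variables of `α`. -/
theorem stmt7 (F : CNF) (hU : Unsat F) (α : Assign) (s : ℕ)
    (h : DLLUnsat F α s) :
    ∃ (C : Clause) (t : RTree), IsResTreeFrom F t ∧ t.regular ∧ t.conc = C ∧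
      falsifies α C ∧ t.size ≤ s + 1 ∧ ∀ x ∈ t.resVars, α x = none :=
  stmt7_general F α s h
end
end

section
/- Let F be an unsatisfiable set of clauses, T a regular resolution tree deriving clause C from F of size s, and α a partial assignment falsifying C with no variable of α's domain used as a resolution variable in T. Then there is an execution of DLL(F, α) returning UNSAT after at most s−1 recursive calls. -/
open Classical

noncomputable section

/-!
Induction on the tree. At a node resolving `C₀` (containing `x`) and `C₁` (containing `¬x`)
into `C`, the variable `x` is unassigned by `α`, so DLL may branch on it: `α[x := 0]` falsifies
`C₀` and `α[x := 1]` falsifies `C₁`, since both premises lie in `C ∪ {x, ¬x}`. Regularity keeps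
`x` out of the resolution variables of the two subtrees, so the induction hypothesis applies to
them, and the two recursive calls cost `2` per internal node, i.e. at most `size - 1` in total.
-/

namespace Assign

lemma set_apply_of_ne {α : Assign} {x y : Var} (b : Bool) (h : y ≠ x) : α.set x b y = α y :=
  if_neg h

lemma set_apply_self (α : Assign) (x : Var) (b : Bool) : α.set x b x = some b :=
  if_pos rfl

end Assign

namespace falsifies

variable {α : Assign} {C D : Clause}

lemma mono_s8 (h : falsifies α C) (hD : D ⊆ C) : falsifies α D :=
  fun l hl => h l (hD hl)

lemma set (h : falsifies α C) {x : Var} (hx : α x = none) (b : Bool) :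
    falsifies (α.set x b) C := by
  intro l hl
  have hne : l.1 ≠ x := by
    rintro rfl
    simpa [hx] using h l hl
  rw [Assign.set_apply_of_ne b hne]
  exact h l hl

lemma insert (h : falsifies α C) {l : Lit} (hl : α l.1 = some (!l.2)) :
    falsifies α (insert l C) :=
  (Finset.forall_mem_insert _ _ _).2 ⟨hl, h⟩

end falsifies

lemma falsifies_set_false_of_resolvent {α : Assign} {C₀ C₁ : Clause} {x : Var}
    (h : falsifies α (Resolvent C₀ C₁ x)) (hx : α x = none) :
    falsifies (α.set x false) C₀ := by
  have hC : insert (posLit x) (Resolvent C₀ C₁ x) ⊇ C₀ :=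
    (Finset.insert_erase_subset _ C₀).trans
      (Finset.insert_subset_insert _ Finset.subset_union_left)
  exact ((h.set hx false).insert (Assign.set_apply_self α x false)).mono_s8 hC

lemma falsifies_set_true_of_resolvent {α : Assign} {C₀ C₁ : Clause} {x : Var}
    (h : falsifies α (Resolvent C₀ C₁ x)) (hx : α x = none) :
    falsifies (α.set x true) C₁ := by
  have hC : insert (negLit x) (Resolvent C₀ C₁ x) ⊇ C₁ :=
    (Finset.insert_erase_subset _ C₁).trans
      (Finset.insert_subset_insert _ Finset.subset_union_right)
  exact ((h.set hx true).insert (Assign.set_apply_self α x true)).mono_s8 hC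

lemma CNFTrue.set {F : CNF} {α : Assign} (h : CNFTrue F α) {x : Var} (hx : α x = none)
    (b : Bool) : CNFTrue F (α.set x b) := by
  intro C hC
  obtain ⟨l, hl, hsat⟩ := h C hC
  have hne : l.1 ≠ x := by
    rintro rfl
    simp [satLit, hx] at hsat
  exact ⟨l, hl, (Assign.set_apply_of_ne b hne).trans hsat⟩

namespace DLLUnsat

variable {F : CNF} {α : Assign} {s : ℕ}

lemma not_cnfTrue (h : DLLUnsat F α s) : ¬ CNFTrue F α := by
  cases h with
  | conflict _ hF =>
    obtain ⟨C, hC, hfal⟩ := hF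
    intro hT
    obtain ⟨l, hl, hsat⟩ := hT C hC
    simp [satLit, hfal l hl] at hsat
  | branch _ _ _ _ _ _ hnot1 => exact hnot1

/-- Branching is always possible: if `F↾α = 0` DLL stops at once instead, and `F↾α ≠ 1`
because some extension of `α` is refuted. -/
lemma exists_of_set {x : Var} (hx : α x = none) {ε : Bool} {s₀ s₁ : ℕ}
    (h₀ : DLLUnsat F (α.set x ε) s₀) (h₁ : DLLUnsat F (α.set x (!ε)) s₁) :
    ∃ s ≤ s₀ + s₁ + 2, DLLUnsat F α s := by
  by_cases hF : CNFFalse F α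
  · exact ⟨0, Nat.zero_le _, .conflict α hF⟩
  · have hT : ¬ CNFTrue F α := fun hT => h₀.not_cnfTrue (hT.set hx ε)
    exact ⟨_, le_rfl, .branch α x ε s₀ s₁ hF hT hx h₀ h₁⟩

end DLLUnsat

namespace RTree

lemma one_le_size : ∀ t : RTree, 1 ≤ t.size
  | leaf _ => le_rfl
  | node _ _ _ _ => Nat.le_add_left _ _

lemma regAux_anti : ∀ {t : RTree} {S S' : Set Var}, S' ⊆ S → t.regAux S → t.regAux S'
  | leaf _, _, _, _, _ => trivial
  | node _ _ _ _, _, _, hS, ⟨hx, h₀, h₁⟩ =>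
    ⟨fun h => hx (hS h), regAux_anti (Set.insert_subset_insert hS) h₀,
      regAux_anti (Set.insert_subset_insert hS) h₁⟩

lemma notMem_resVars_of_regAux :
    ∀ {t : RTree} {S : Set Var}, t.regAux S → ∀ y ∈ S, y ∉ t.resVars
  | leaf _, _, _, _, _ => Finset.notMem_empty _
  | node _ x _ _, _, ⟨hx, h₀, h₁⟩, y, hy => by
    simp only [resVars, Finset.mem_insert, Finset.mem_union, not_or]
    exact ⟨by rintro rfl; exact hx hy,
      notMem_resVars_of_regAux h₀ y (Set.mem_insert_of_mem _ hy),
      notMem_resVars_of_regAux h₁ y (Set.mem_insert_of_mem _ hy)⟩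

lemma regular.left {C : Clause} {x : Var} {t₀ t₁ : RTree} (h : (node C x t₀ t₁).regular) :
    t₀.regular ∧ x ∉ t₀.resVars :=
  ⟨regAux_anti (Set.empty_subset _) h.2.1,
    notMem_resVars_of_regAux h.2.1 x (Set.mem_insert x ∅)⟩

lemma regular.right {C : Clause} {x : Var} {t₀ t₁ : RTree} (h : (node C x t₀ t₁).regular) :
    t₁.regular ∧ x ∉ t₁.resVars :=
  ⟨regAux_anti (Set.empty_subset _) h.2.2,
    notMem_resVars_of_regAux h.2.2 x (Set.mem_insert x ∅)⟩

end RTree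

lemma dllUnsat_of_regular_resTree {F : CNF} :
    ∀ {t : RTree}, IsResTreeFrom F t → t.regular → ∀ {α : Assign}, falsifies α t.conc →
      (∀ x ∈ t.resVars, α x = none) → ∃ s ≤ t.size - 1, DLLUnsat F α s
  | .leaf C, ht, _, α, hα, _ => ⟨0, Nat.zero_le _, .conflict α ⟨C, ht, hα⟩⟩
  | .node C x t₀ t₁, ⟨ht₀, ht₁, _, _, hC⟩, hreg, α, hα, hdisj => by
    have hx : α x = none := hdisj x (Finset.mem_insert_self _ _)
    rw [RTree.conc, hC] at hα
    obtain ⟨hreg₀, hx₀⟩ := hreg.left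
    obtain ⟨hreg₁, hx₁⟩ := hreg.right
    have hdisj₀ : ∀ y ∈ t₀.resVars, α.set x false y = none := fun y hy =>
      (Assign.set_apply_of_ne _ (ne_of_mem_of_not_mem hy hx₀)).trans
        (hdisj y (by simp [RTree.resVars, hy]))
    have hdisj₁ : ∀ y ∈ t₁.resVars, α.set x true y = none := fun y hy =>
      (Assign.set_apply_of_ne _ (ne_of_mem_of_not_mem hy hx₁)).trans
        (hdisj y (by simp [RTree.resVars, hy]))
    obtain ⟨s₀, hs₀, h₀⟩ := dllUnsat_of_regular_resTree ht₀ hreg₀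
      (falsifies_set_false_of_resolvent hα hx) hdisj₀
    obtain ⟨s₁, hs₁, h₁⟩ := dllUnsat_of_regular_resTree ht₁ hreg₁
      (falsifies_set_true_of_resolvent hα hx) hdisj₁
    obtain ⟨s, hs, h⟩ := DLLUnsat.exists_of_set hx h₀ h₁
    have := t₀.one_le_size
    have := t₁.one_le_size
    exact ⟨s, by simp only [RTree.size]; omega, h⟩

theorem stmt8_general (F : CNF) (t : RTree) (s : ℕ)
    (ht : IsResTreeFrom F t) (hreg : t.regular) (hs : t.size = s)
    (α : Assign) (hα : falsifies α t.conc)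
    (hdisj : ∀ x ∈ t.resVars, α x = none) :
    ∃ s' ≤ s - 1, DLLUnsat F α s' :=
  hs ▸ dllUnsat_of_regular_resTree ht hreg hα hdisj

/-- Prop. 4.2: a regular resolution tree of size `s` for a clause falsified by
`α` (with resolution variables disjoint from `dom α`) yields a DLL execution on
`(F, α)` returning UNSAT after at most `s - 1` recursive calls. -/
theorem stmt8 (F : CNF) (hU : Unsat F) (t : RTree) (s : ℕ)
    (ht : IsResTreeFrom F t) (hreg : t.regular) (hs : t.size = s)
    (α : Assign) (hα : falsifies α t.conc)
    (hdisj : ∀ x ∈ t.resVars, α x = none) :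
    ∃ s' ≤ s - 1, DLLUnsat F α s' :=
  stmt8_general F t s ht hreg hs α hα hdisj
end
end

section
/- Let C be a clause of size k ≤ n/2 over the variables x_{i,j} (1 ≤ i ≤ n+1, 1 ≤ j ≤ n) of the functional pigeonhole principle, such that C is not tautological, C contains no hole clause {¬x_{i,j}, ¬x_{i',j}} (i ≠ i') as a subset, and C contains no functional clause {¬x_{i,j}, ¬x_{i,j'}} (j ≠ j') as a subset. Then there is a matching ρ ⊆ {1,…,n+1} × {1,…,n} of size at most k whose induced partial assignment falsifies every literal of C. -/
/-!
The negative literals of `C` already form a matching: two of them in one row would be a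
functional clause, two in one column a hole clause. This matching sets to `0` every positive
literal whose row it meets, because `C` is not tautological. Each remaining row of a positive
literal is matched to its own column that occurs nowhere in `C`; `C` mentions at most `k` of the
`n ≥ 2k` columns, so there are enough of them. The matching has at most one pair per literal.
-/

open Finset

theorem Finset.exists_mapsTo_injOn_of_card_le {α β : Type*} [Nonempty β] {s : Finset α}
    {t : Finset β} (h : #s ≤ #t) : ∃ f : α → β, Set.MapsTo f s t ∧ Set.InjOn f s :=
  s.finite_toSet.exists_injOn_of_encard_le (t := (t : Set β))
    (by simpa only [Set.encard_coe_eq_coe_finsetCard, Nat.cast_le] using h)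

namespace PigeonholeClause

variable {α β : Type*}

/-- The literal `((i, j), true)` is `x_{i,j}` and `((i, j), false)` is `¬x_{i,j}`. -/
def Falsifies (ρ : Finset (α × β)) (l : (α × β) × Bool) : Prop :=
  if l.2 then ∃ p ∈ ρ, (p.1 = l.1.1 ∧ p.2 ≠ l.1.2) ∨ (p.2 = l.1.2 ∧ p.1 ≠ l.1.1)
  else l.1 ∈ ρ

noncomputable def signedVars (C : Finset ((α × β) × Bool)) (b : Bool) : Finset (α × β) :=
  C.preimage (·, b) (Prod.mk_left_injective b).injOn

@[simp]
theorem mem_signedVars {C : Finset ((α × β) × Bool)} {b : Bool} {v : α × β} :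
    v ∈ signedVars C b ↔ (v, b) ∈ C :=
  mem_preimage

theorem card_signedVars_false_add_card_signedVars_true (C : Finset ((α × β) × Bool)) :
    #(signedVars C false) + #(signedVars C true) = #C := by
  let embed (b : Bool) : α × β ↪ (α × β) × Bool := ⟨(·, b), Prod.mk_left_injective b⟩
  have hdisj :
      Disjoint ((signedVars C false).map (embed false)) ((signedVars C true).map (embed true)) := by
    simp [disjoint_left, embed]
  have hsplit : C =
      ((signedVars C false).map (embed false)).disjUnion ((signedVars C true).map (embed true))
        hdisj := by
    ext ⟨v, b⟩
    cases b <;> simp [embed]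
  conv_rhs => rw [hsplit]
  rw [card_disjUnion, card_map, card_map]

theorem injOn_fst_signedVars_false {C : Finset ((α × β) × Bool)}
    (hfun : ¬ ∃ i j j', j ≠ j' ∧ ((i, j), false) ∈ C ∧ ((i, j'), false) ∈ C) :
    Set.InjOn Prod.fst (signedVars C false : Set (α × β)) := by
  rintro ⟨i, j⟩ hij ⟨i', j'⟩ hij' (rfl : i = i')
  by_contra hne
  exact hfun ⟨i, j, j', fun h => hne (h ▸ rfl), by simpa using hij, by simpa using hij'⟩

theorem injOn_snd_signedVars_false {C : Finset ((α × β) × Bool)}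
    (hhole : ¬ ∃ i i' j, i ≠ i' ∧ ((i, j), false) ∈ C ∧ ((i', j), false) ∈ C) :
    Set.InjOn Prod.snd (signedVars C false : Set (α × β)) := by
  rintro ⟨i, j⟩ hij ⟨i', j'⟩ hij' (rfl : j = j')
  by_contra hne
  exact hhole ⟨i, i', j, fun h => hne (h ▸ rfl), by simpa using hij, by simpa using hij'⟩

section

variable [DecidableEq α]

noncomputable def freshRows (C : Finset ((α × β) × Bool)) : Finset α :=
  (signedVars C true).image Prod.fst \ (signedVars C false).image Prod.fst

@[simp]
theorem mem_freshRows {C : Finset ((α × β) × Bool)} {i : α} :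
    i ∈ freshRows C ↔ (∃ j, ((i, j), true) ∈ C) ∧ ¬ ∃ j, ((i, j), false) ∈ C := by
  simp [freshRows]

theorem card_freshRows_le (C : Finset ((α × β) × Bool)) :
    #(freshRows C) ≤ #(signedVars C true) :=
  (card_le_card sdiff_subset).trans card_image_le

variable [DecidableEq β]

def columns (C : Finset ((α × β) × Bool)) : Finset β :=
  C.image (·.1.2)

theorem exists_fresh_columns [Nonempty β] (C : Finset ((α × β) × Bool)) (avail : Finset β)
    (h : 2 * #C ≤ #avail) :
    ∃ f : α → β, Set.MapsTo f (freshRows C) (avail \ columns C : Finset β) ∧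
      Set.InjOn f (freshRows C) := by
  apply exists_mapsTo_injOn_of_card_le
  have h₁ := card_freshRows_le C
  have h₂ := card_signedVars_false_add_card_signedVars_true C
  have h₃ : #(columns C) ≤ #C := card_image_le
  have h₄ := le_card_sdiff (columns C) avail
  omega

noncomputable def falsifyingMatching (C : Finset ((α × β) × Bool)) (f : α → β) :
    Finset (α × β) :=
  signedVars C false ∪ (freshRows C).image fun i => (i, f i)

variable {C : Finset ((α × β) × Bool)} {f : α → β}

theorem mem_falsifyingMatching {p : α × β} :
    p ∈ falsifyingMatching C f ↔ (p, false) ∈ C ∨ p.1 ∈ freshRows C ∧ p.2 = f p.1 := by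
  obtain ⟨i, j⟩ := p
  simp only [falsifyingMatching, mem_union, mem_signedVars, mem_image, Prod.mk.injEq]
  constructor
  · rintro (h | ⟨i, hi, rfl, rfl⟩)
    · exact .inl h
    · exact .inr ⟨hi, rfl⟩
  · rintro (h | ⟨hi, rfl⟩)
    · exact .inl h
    · exact .inr ⟨i, hi, rfl, rfl⟩

theorem injOn_fst_falsifyingMatching
    (hfun : ¬ ∃ i j j', j ≠ j' ∧ ((i, j), false) ∈ C ∧ ((i, j'), false) ∈ C) :
    Set.InjOn Prod.fst (falsifyingMatching C f : Set (α × β)) := by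
  rintro ⟨i, j⟩ hp ⟨i', j'⟩ hq (rfl : i = i')
  rw [mem_coe, mem_falsifyingMatching] at hp hq
  rcases hp with hp | ⟨hp, hpf⟩ <;> rcases hq with hq | ⟨hq, hqf⟩
  · exact injOn_fst_signedVars_false hfun (by simpa) (by simpa) rfl
  · exact absurd ⟨j, hp⟩ (mem_freshRows.1 hq).2
  · exact absurd ⟨j', hq⟩ (mem_freshRows.1 hp).2
  · exact Prod.ext rfl (hpf.trans hqf.symm)

theorem injOn_snd_falsifyingMatching
    (hhole : ¬ ∃ i i' j, i ≠ i' ∧ ((i, j), false) ∈ C ∧ ((i', j), false) ∈ C)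
    (hfresh : Set.MapsTo f (freshRows C) (columns C : Set β)ᶜ) (hf : Set.InjOn f (freshRows C)) :
    Set.InjOn Prod.snd (falsifyingMatching C f : Set (α × β)) := by
  intro p hp q hq hpq
  rw [mem_coe, mem_falsifyingMatching] at hp hq
  rcases hp with hp | ⟨hp, hpf⟩ <;> rcases hq with hq | ⟨hq, hqf⟩
  · exact injOn_snd_signedVars_false hhole (by simpa) (by simpa) hpq
  · exact absurd (mem_image_of_mem _ hp) (hpq ▸ hqf ▸ hfresh hq)
  · exact absurd (mem_image_of_mem _ hq) (hpq ▸ hpf ▸ hfresh hp)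
  · exact Prod.ext (hf hp hq (by rw [← hpf, ← hqf, hpq])) hpq

theorem card_falsifyingMatching_le : #(falsifyingMatching C f) ≤ #C := calc
  #(falsifyingMatching C f) ≤ #(signedVars C false) + #(freshRows C) :=
    (card_union_le _ _).trans (Nat.add_le_add_left card_image_le _)
  _ ≤ #(signedVars C false) + #(signedVars C true) := Nat.add_le_add_left (card_freshRows_le C) _
  _ = #C := card_signedVars_false_add_card_signedVars_true C

theorem falsifies_falsifyingMatching (htaut : ¬ ∃ v, (v, true) ∈ C ∧ (v, false) ∈ C)
    (hfresh : Set.MapsTo f (freshRows C) (columns C : Set β)ᶜ) {l : (α × β) × Bool}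
    (hl : l ∈ C) :
    Falsifies (falsifyingMatching C f) l := by
  obtain ⟨⟨i, j⟩, _ | _⟩ := l
  · exact mem_falsifyingMatching.2 (.inl hl)
  by_cases hneg : ∃ j', ((i, j'), false) ∈ C
  · obtain ⟨j', hj'⟩ := hneg
    refine ⟨(i, j'), mem_falsifyingMatching.2 (.inl hj'), .inl ⟨rfl, ?_⟩⟩
    rintro rfl
    exact htaut ⟨_, hl, hj'⟩
  · have hi : i ∈ freshRows C := mem_freshRows.2 ⟨⟨j, hl⟩, hneg⟩
    refine ⟨(i, f i), mem_falsifyingMatching.2 (.inr ⟨hi, rfl⟩), .inl ⟨rfl, ?_⟩⟩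
    rintro rfl
    exact hfresh hi (mem_image_of_mem _ hl)

end

end PigeonholeClause

open PigeonholeClause in
/-- Lem. 8.4: a non-tautological clause `C` of size `k ≤ n/2` over the
pigeonhole variables `x_{i,j}` (literals are pairs `((i,j), b)`), containing no
hole clause and no functional clause as a subset, is falsified by the partial
assignment induced by some matching `ρ` of size `≤ k`. -/
theorem stmt17 (n : ℕ) (C : Finset ((ℕ × ℕ) × Bool)) (k : ℕ)
    (hk : C.card = k) (hkn : 2 * k ≤ n)
    (hvars : ∀ l ∈ C, 1 ≤ l.1.1 ∧ l.1.1 ≤ n + 1 ∧ 1 ≤ l.1.2 ∧ l.1.2 ≤ n)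
    (htaut : ¬ ∃ v, (v, true) ∈ C ∧ (v, false) ∈ C)
    (hhole : ¬ ∃ i i' j, i ≠ i' ∧ ((i, j), false) ∈ C ∧ ((i', j), false) ∈ C)
    (hfun : ¬ ∃ i j j', j ≠ j' ∧ ((i, j), false) ∈ C ∧ ((i, j'), false) ∈ C) :
    ∃ ρ : Finset (ℕ × ℕ),
      (∀ p ∈ ρ, 1 ≤ p.1 ∧ p.1 ≤ n + 1 ∧ 1 ≤ p.2 ∧ p.2 ≤ n) ∧
      (∀ p ∈ ρ, ∀ q ∈ ρ, p.1 = q.1 → p = q) ∧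
      (∀ p ∈ ρ, ∀ q ∈ ρ, p.2 = q.2 → p = q) ∧
      ρ.card ≤ k ∧
      (∀ l ∈ C, if l.2
        then ∃ p ∈ ρ, (p.1 = l.1.1 ∧ p.2 ≠ l.1.2) ∨ (p.2 = l.1.2 ∧ p.1 ≠ l.1.1)
        else l.1 ∈ ρ) := by
  obtain ⟨f, hmaps, hf⟩ := exists_fresh_columns C (Icc 1 n) (by simpa [hk] using hkn)
  have hfresh : Set.MapsTo f (freshRows C) (columns C : Set ℕ)ᶜ :=
    fun i hi => (mem_sdiff.1 (hmaps hi)).2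
  refine ⟨falsifyingMatching C f, ?_, fun p hp q hq => injOn_fst_falsifyingMatching hfun hp hq,
    fun p hp q hq => injOn_snd_falsifyingMatching hhole hfresh hf hp hq,
    card_falsifyingMatching_le.trans_eq hk,
    fun l hl => falsifies_falsifyingMatching htaut hfresh hl⟩
  intro p hp
  rcases mem_falsifyingMatching.1 hp with hneg | ⟨hi, hpf⟩
  · exact hvars _ hneg
  · obtain ⟨⟨j', hj'⟩, -⟩ := mem_freshRows.1 hi
    have hrow := hvars _ hj'
    have hcol := mem_Icc.1 (mem_sdiff.1 (hmaps hi)).1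
    exact ⟨hrow.1, hrow.2.1, hpf ▸ hcol⟩
end

section
/- If a CNF F has an RTLW(k) refutation of size s, then F has an RTLW(k) refutation of size at most 2s in which no leaf used as a lemma is labeled by a clause containing some clause of F as a subset. -/
open Classical

noncomputable section

namespace WTree

def subsumeLeaves (F : CNF) : WTree → WTree
  | leaf C => if h : C ∉ F ∧ ∃ D ∈ F, D ⊆ C then weak C (leaf h.2.choose) else leaf C
  | res C x t0 t1 => res C x (t0.subsumeLeaves F) (t1.subsumeLeaves F)
  | weak C t => weak C (t.subsumeLeaves F)

variable {F : CNF}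

@[simp]
theorem conc_subsumeLeaves (t : WTree) : (t.subsumeLeaves F).conc = t.conc := by
  cases t with
  | leaf C => unfold subsumeLeaves; split <;> rfl
  | res | weak => rfl

theorem size_subsumeLeaves_le (t : WTree) : (t.subsumeLeaves F).size ≤ 2 * t.size := by
  induction t with
  | leaf C => unfold subsumeLeaves; split <;> simp [size]
  | res C x t0 t1 ih0 ih1 => simp only [subsumeLeaves, size]; omega
  | weak C t ih => simp only [subsumeLeaves, size]; omega

theorem allClauses_subset_subsumeLeaves (t : WTree) :
    t.allClauses ⊆ (t.subsumeLeaves F).allClauses := by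
  induction t with
  | leaf C =>
    unfold subsumeLeaves; split
    · exact Set.subset_union_left
    · rfl
  | res C x t0 t1 ih0 ih1 => exact Set.union_subset_union (Set.union_subset_union le_rfl ih0) ih1
  | weak C t ih => exact Set.union_subset_union le_rfl ih

theorem not_subset_of_mem_leafClauses_subsumeLeaves {t : WTree} {C : Clause}
    (hC : C ∈ (t.subsumeLeaves F).leafClauses) (hCF : C ∉ F) : ¬ ∃ D ∈ F, D ⊆ C := by
  induction t with
  | leaf E =>
    unfold subsumeLeaves at hC
    split at hC
    case isTrue h =>
      obtain rfl : C = h.2.choose := hC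
      exact absurd h.2.choose_spec.1 hCF
    case isFalse h =>
      obtain rfl : C = E := hC
      exact fun hD => h ⟨hCF, hD⟩
  | res _ _ t0 t1 ih0 ih1 => exact hC.elim ih0 ih1
  | weak _ t ih => exact ih hC

end WTree

section

open WTree

variable {F : CNF} {k : ℕ}

theorem IsRTLW.mono {t : WTree} {avail avail' : Set Clause} (h : avail ⊆ avail')
    (ht : IsRTLW F k t avail) : IsRTLW F k t avail' := by
  induction t generalizing avail avail' with
  | leaf C => exact ht.imp_right (And.imp_left (@h C))
  | res C x t0 t1 ih0 ih1 =>
    exact ⟨ih0 h ht.1, ih1 (Set.union_subset_union_left _ h) ht.2.1, ht.2.2⟩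
  | weak C t ih => exact ⟨ih h ht.1, ht.2⟩

/-- Every lemma of the old tree is still available at the same place, since `subsumeLeaves`
only enlarges `allClauses`. -/
theorem IsRTLW.subsumeLeaves {t : WTree} {avail : Set Clause} (ht : IsRTLW F k t avail) :
    IsRTLW F k (t.subsumeLeaves F) avail := by
  induction t generalizing avail with
  | leaf C =>
    unfold WTree.subsumeLeaves
    split
    case isTrue h => exact ⟨Or.inl h.2.choose_spec.1, h.2.choose_spec.2⟩
    case isFalse => exact ht
  | res C x t0 t1 ih0 ih1 =>
    obtain ⟨ht0, ht1, hpos, hneg, hC⟩ := ht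
    refine ⟨ih0 ht0, ?_, by simpa using hpos, by simpa using hneg, by simpa using hC⟩
    exact (ih1 ht1).mono (Set.union_subset_union_right _ (allClauses_subset_subsumeLeaves t0))
  | weak C t ih => exact ⟨ih ht.1, by simpa using ht.2⟩

end

/-- Lem. 8.2: an RTLW(k) refutation of size `s` can be converted to one of size
`≤ 2s` in which no lemma is subsumed by a clause of `F`. -/
theorem stmt18 (F : CNF) (k : ℕ) (t : WTree) (s : ℕ)
    (ht : IsRTLW F k t ∅) (hc : t.conc = ∅) (hs : t.size = s) :
    ∃ t' : WTree, IsRTLW F k t' ∅ ∧ t'.conc = ∅ ∧ t'.size ≤ 2 * s ∧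
      ∀ C ∈ t'.leafClauses, C ∉ F → ¬ ∃ D ∈ F, D ⊆ C := by
  subst hs
  exact ⟨t.subsumeLeaves F, ht.subsumeLeaves, by simpa using hc, t.size_subsumeLeaves_le,
    fun _ => WTree.not_subset_of_mem_leafClauses_subsumeLeaves⟩
end
end
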